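/- arXiv:2304.05007 — 3 statements merged into one kernel-verified Lean document; each statement's English description precedes it below -/
import Mathlib

section
/- Let n ≥ 1 be an integer, p > 1, q ≥ 1, and β, β' ∈ [0, (p−1)/(p+1)] with β' ≤ β and 2pβ/((p−1)q) ≤ 1. Then for every real γ ≥ 0: D_γ( P^q_{β',p} ‖ Q^q_{β',p} ) ≤ D_γ( P^q_{β,p} ‖ Q^q_{β,p} ). -/
open scoped ENNReal
open Finset

noncomputable section

/-- Clamp a real number into an `ℝ≥0∞` probability (identity on `[0,1]`). -/
def prob (x : ℝ) : ℝ≥0∞ := min (ENNReal.ofReal x) 1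

lemma prob_le_one (x : ℝ) : prob x ≤ 1 := min_le_right _ _

/-- Hockey-stick divergence `D_γ(P‖Q) = ∑_y max 0 (P y − γ·Q y)`. -/
def hsDiv {Y : Type*} (P Q : PMF Y) (γ : ℝ) : ℝ :=
  ∑' y, max 0 ((P y).toReal - γ * (Q y).toReal)

/-- The shuffle of a list of PMFs: sample independently and return the multiset of results. -/
def shuffle {Y : Type*} : List (PMF Y) → PMF (Multiset Y)
  | [] => PMF.pure 0
  | μ :: μs => μ.bind fun y => (shuffle μs).map fun s => y ::ₘ s

/-- Binomial law on ℕ with `m` trials and success probability `θ` (a real, clamped). -/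
def binomN (θ : ℝ) (m : ℕ) : PMF ℕ :=
  (PMF.binomial (prob θ).toNNReal
    (by simpa using ENNReal.toNNReal_mono ENNReal.one_ne_top (prob_le_one θ)) m).map Fin.val

/-- Three-point distribution on `Fin 3` with weights `w1, w2, 1 − w1 − w2` (clamped). -/
def triR (w1 w2 : ℝ) : PMF (Fin 3) :=
  PMF.ofFintype
    ![prob w1, min (prob w2) (1 - prob w1),
      1 - (prob w1 + min (prob w2) (1 - prob w1))]
    (by
      have h : prob w1 + min (prob w2) (1 - prob w1) ≤ 1 := by
        calc prob w1 + min (prob w2) (1 - prob w1)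
            ≤ prob w1 + (1 - prob w1) := by gcongr; exact min_le_right _ _
          _ = 1 := add_tsub_cancel_of_le (prob_le_one w1)
      simp only [Fin.sum_univ_three, Matrix.cons_val_zero, Matrix.cons_val_one,
        Matrix.head_cons, Matrix.cons_val_two, Matrix.tail_cons]
      exact add_tsub_cancel_of_le h)

/-- Law of `(A+Δ₁, C−A+Δ₂)` where `C ~ Binomial(m, θC)`, `A ~ Binomial(C, θA)`, and
`(Δ₁,Δ₂)` equals `(1,0)` w.p. `w1`, `(0,1)` w.p. `w2`, `(0,0)` otherwise. -/
def lawP (m : ℕ) (θC θA w1 w2 : ℝ) : PMF (ℕ × ℕ) :=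
  (binomN θC m).bind fun c =>
    (binomN θA c).bind fun a =>
      (triR w1 w2).map fun d =>
        if d = 0 then (a + 1, c - a) else if d = 1 then (a, c - a + 1) else (a, c - a)

/-- Law of `(A+Δ₂, C−A+Δ₁)` for the same sampling process. -/
def lawQ (m : ℕ) (θC θA w1 w2 : ℝ) : PMF (ℕ × ℕ) :=
  (binomN θC m).bind fun c =>
    (binomN θA c).bind fun a =>
      (triR w1 w2).map fun d =>
        if d = 0 then (a, c - a + 1) else if d = 1 then (a + 1, c - a) else (a, c - a)

/-- `P^q_{β,p}` with `n` users: `α = β/(p−1)`, `r = pα/q`, `C ~ Binomial(n−1, 2r)`,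
`A ~ Binomial(C, 1/2)`. -/
def Pq (n : ℕ) (p β q : ℝ) : PMF (ℕ × ℕ) :=
  lawP (n - 1) (2 * (p * (β / (p - 1)) / q)) (1 / 2) (p * (β / (p - 1))) (β / (p - 1))

/-- `Q^q_{β,p}`. -/
def Qq (n : ℕ) (p β q : ℝ) : PMF (ℕ × ℕ) :=
  lawQ (n - 1) (2 * (p * (β / (p - 1)) / q)) (1 / 2) (p * (β / (p - 1))) (β / (p - 1))

/-- `CDF_{c,θ}[c₁,c₂] = ∑_{c₁ ≤ i ≤ c₂, 0 ≤ i ≤ c} C(c,i) θ^i (1−θ)^{c−i}`. -/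
def binCDF (c : ℕ) (θ : ℝ) (c1 c2 : ℝ) : ℝ :=
  ∑ i ∈ Finset.range (c + 1),
    if c1 ≤ (i : ℝ) ∧ (i : ℝ) ≤ c2 then (c.choose i : ℝ) * θ ^ i * (1 - θ) ^ (c - i) else 0

/-- Expectation of `f` under `Binomial(m, θ)`. -/
def binExp (m : ℕ) (θ : ℝ) (f : ℕ → ℝ) : ℝ :=
  ∑ c ∈ Finset.range (m + 1), (m.choose c : ℝ) * θ ^ c * (1 - θ) ^ (m - c) * f c

/-- The `(p, β)`-variation property of the first randomizer. -/
def VariationProp {X Y : Type*} (R1 : X → PMF Y) (p β : ℝ) : Prop :=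
  ∀ x x' : X, (∀ y, (R1 x y).toReal ≤ p * (R1 x' y).toReal) ∧ hsDiv (R1 x) (R1 x') 1 ≤ β

/-- The `q`-ratio property of the first randomizer w.r.t. the others. -/
def RatioProp {X Y : Type*} {m : ℕ} (R1 : X → PMF Y) (R : Fin m → X → PMF Y) (q : ℝ) : Prop :=
  ∀ (i : Fin m) (x x' : X) (y : Y), (R1 x y).toReal ≤ q * (R i x' y).toReal

/-!
Write `ρ = β'/β`. Thinning both coordinates of a sample independently, each unit being kept
with probability `ρ`, maps `P^q_{β,p}` to `P^q_{β',p}` and `Q^q_{β,p}` to `Q^q_{β',p}`: the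
count `C ~ Binomial(n-1, 2r)` with its fair split becomes `Binomial(n-1, 2ρr)` with a fair
split, and the extra unit `(Δ₁, Δ₂)` survives with probability `ρ`, turning the weights
`(pα, α)` into `(ρpα, ρα)`. Both pairs are therefore images of the previous ones under one
Markov kernel, and the hockey-stick divergence satisfies the data-processing inequality.
-/

theorem Nat.choose_mul_choose_sub (m a b : ℕ) :
    m.choose a * (m - a).choose b = m.choose (a + b) * (a + b).choose a := by
  rcases le_or_gt (a + b) m with h | h
  · rw [Nat.choose_mul (Nat.le_add_right a b), Nat.add_sub_cancel_left]
  · rw [Nat.choose_eq_zero_of_lt h, zero_mul]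
    rcases le_or_gt a m with ha | ha
    · rw [Nat.choose_eq_zero_of_lt (by omega : m - a < b), mul_zero]
    · rw [Nat.choose_eq_zero_of_lt ha, zero_mul]

theorem Nat.choose_mul_choose_sub_comm (m a b : ℕ) :
    m.choose a * (m - a).choose b = m.choose b * (m - b).choose a := by
  rw [Nat.choose_mul_choose_sub, Nat.choose_mul_choose_sub, add_comm b, Nat.choose_symm_add]

lemma ENNReal.tsum_ofReal_eq_ofReal_sum {α : Type*} {g : α → ℝ} (s : Finset α)
    (hg : ∀ a, 0 ≤ g a) (hs : ∀ a ∉ s, g a = 0) :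
    ∑' a, ENNReal.ofReal (g a) = ENNReal.ofReal (∑ a ∈ s, g a) := by
  rw [tsum_eq_sum fun a ha => by rw [hs a ha, ENNReal.ofReal_zero],
    ENNReal.ofReal_sum_of_nonneg fun a _ => hg a]

lemma PMF.map_add_right_apply (μ : PMF (ℕ × ℕ)) (e z : ℕ × ℕ) :
    (μ.map (· + e)) z = if e ≤ z then μ (z - e) else 0 := by
  rw [PMF.map_apply]
  split_ifs with h
  · refine (tsum_eq_single (z - e) fun u hu => if_neg fun hz => hu ?_).trans ?_
    · exact (eq_tsub_iff_add_eq_of_le h).2 hz.symm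
    · exact if_pos (tsub_add_cancel_of_le h).symm
  · exact ENNReal.tsum_eq_zero.2 fun u => if_neg fun hz => h (by rw [hz]; exact le_add_self)

section HockeyStick

variable {X Y : Type*}

lemma max_zero_toReal_sub_eq_toReal_tsub {a b : ℝ≥0∞} (ha : a ≠ ∞) (hb : b ≠ ∞) {γ : ℝ}
    (hγ : 0 ≤ γ) : max 0 (a.toReal - γ * b.toReal) = (a - ENNReal.ofReal γ * b).toReal := by
  have hγb : ENNReal.ofReal γ * b ≠ ∞ := ENNReal.mul_ne_top ENNReal.ofReal_ne_top hb
  rcases le_total (ENNReal.ofReal γ * b) a with h | h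
  · rw [ENNReal.toReal_sub_of_le h ha, ENNReal.toReal_mul, ENNReal.toReal_ofReal hγ,
      max_eq_right]
    rw [sub_nonneg, ← ENNReal.toReal_ofReal hγ, ← ENNReal.toReal_mul]
    exact ENNReal.toReal_mono ha h
  · rw [tsub_eq_zero_of_le h, ENNReal.toReal_zero, max_eq_left]
    rw [sub_nonpos, ← ENNReal.toReal_ofReal hγ, ← ENNReal.toReal_mul]
    exact ENNReal.toReal_mono hγb h

lemma hsDiv_eq_toReal_tsum (P Q : PMF Y) {γ : ℝ} (hγ : 0 ≤ γ) :
    hsDiv P Q γ = (∑' y, (P y - ENNReal.ofReal γ * Q y)).toReal := by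
  rw [ENNReal.tsum_toReal_eq fun y => ne_top_of_le_ne_top (P.apply_ne_top y) tsub_le_self]
  exact tsum_congr fun y =>
    max_zero_toReal_sub_eq_toReal_tsub (P.apply_ne_top y) (Q.apply_ne_top y) hγ

theorem hsDiv_bind_le (P Q : PMF X) (K : X → PMF Y) {γ : ℝ} (hγ : 0 ≤ γ) :
    hsDiv (P.bind K) (Q.bind K) γ ≤ hsDiv P Q γ := by
  rw [hsDiv_eq_toReal_tsum _ _ hγ, hsDiv_eq_toReal_tsum _ _ hγ]
  set c := ENNReal.ofReal γ
  have hfin : ∑' x, (P x - c * Q x) ≠ ∞ :=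
    ne_top_of_le_ne_top ENNReal.one_ne_top
      (P.tsum_coe ▸ ENNReal.tsum_le_tsum fun _ => tsub_le_self)
  refine ENNReal.toReal_mono hfin ?_
  calc ∑' y, ((P.bind K) y - c * (Q.bind K) y)
      ≤ ∑' y, ∑' x, (P x - c * Q x) * K x y := ENNReal.tsum_le_tsum fun y => by
        rw [PMF.bind_apply, PMF.bind_apply, tsub_le_iff_left, ← ENNReal.tsum_mul_left,
          ← ENNReal.tsum_add]
        refine ENNReal.tsum_le_tsum fun x => ?_
        rw [← mul_assoc, ← add_mul]
        exact mul_le_mul_left le_add_tsub _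
    _ = ∑' x, (P x - c * Q x) := by
        rw [ENNReal.tsum_comm]
        simp only [ENNReal.tsum_mul_left, PMF.tsum_coe, mul_one]

end HockeyStick

section BinomialDensity

def binomDens (θ : ℝ) (m k : ℕ) : ℝ := m.choose k * θ ^ k * (1 - θ) ^ (m - k)

variable {θ ρ : ℝ} {m k : ℕ}

lemma binomDens_nonneg (h0 : 0 ≤ θ) (h1 : θ ≤ 1) : 0 ≤ binomDens θ m k := by
  have : 0 ≤ 1 - θ := by linarith
  unfold binomDens
  positivity

lemma binomDens_eq_zero_of_lt (h : m < k) : binomDens θ m k = 0 := by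
  simp [binomDens, Nat.choose_eq_zero_of_lt h]

lemma binomDens_succ (a x : ℕ) : binomDens ρ (a + 1) x
    = (if 1 ≤ x then ρ * binomDens ρ a (x - 1) else 0) + (1 - ρ) * binomDens ρ a x := by
  rcases x with _ | x
  · simp [binomDens, pow_succ]
    ring
  · simp only [le_add_iff_nonneg_left, zero_le, if_true, Nat.add_sub_cancel, binomDens,
      Nat.choose_succ_succ, Nat.cast_add, Nat.add_sub_add_right]
    rcases le_or_gt (x + 1) a with h | h
    · rw [show a - x = a - (x + 1) + 1 by omega, pow_succ]
      ring
    · rw [Nat.choose_eq_zero_of_lt h]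
      simp only [Nat.cast_zero]
      ring

/-- For `v = 1 - u`: keeping each success of a `Binomial(n, u)` count independently with
probability `ρ` yields a `Binomial(n, uρ)` count. -/
lemma sum_choose_mul_binomDens (u v ρ : ℝ) (n y : ℕ) {N : ℕ} (hN : n + 1 ≤ N) :
    ∑ b ∈ range N, n.choose b * u ^ b * v ^ (n - b) * binomDens ρ b y
      = n.choose y * (u * ρ) ^ y * (u * (1 - ρ) + v) ^ (n - y) := by
  have hvanish : ∀ b ∈ range N, n < b ∨ b < y →
      n.choose b * u ^ b * v ^ (n - b) * binomDens ρ b y = 0 := by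
    rintro b - (hb | hb)
    · simp [Nat.choose_eq_zero_of_lt hb]
    · simp [binomDens_eq_zero_of_lt hb]
  rcases le_or_gt y n with hy | hy
  · rw [← Finset.sum_range_add_sum_Ico _ hN, Finset.sum_eq_zero (s := Ico _ _) fun b hb =>
      hvanish b (by simp at hb ⊢; omega) (by simp at hb; omega), add_zero,
      show n + 1 = y + (n - y + 1) by omega, Finset.sum_range_add,
      Finset.sum_eq_zero fun b hb => hvanish b (by simp at hb ⊢; omega) (by simp at hb; omega),
      zero_add, add_pow, Finset.mul_sum]
    refine Finset.sum_congr rfl fun j hj => ?_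
    have hj : j ≤ n - y := by simp at hj; omega
    have hchoose : (n.choose (y + j) : ℝ) * (y + j).choose y = n.choose y * (n - y).choose j := by
      have := Nat.choose_mul (n := n) (k := y + j) (s := y) (by omega)
      rw [Nat.add_sub_cancel_left] at this
      exact_mod_cast this
    rw [binomDens, Nat.add_sub_cancel_left, show n - (y + j) = n - y - j by omega]
    rw [mul_pow, mul_pow, pow_add]
    linear_combination (u ^ y * u ^ j * v ^ (n - y - j) * ρ ^ y * (1 - ρ) ^ j) * hchoose
  · rw [Nat.choose_eq_zero_of_lt hy, Nat.cast_zero, zero_mul, zero_mul]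
    exact Finset.sum_eq_zero fun b hb => hvanish b hb (by omega)

end BinomialDensity

section SplitDensity

/-- The density of `(A, C - A)` when `C ~ Binomial(m, θ)` and `A ~ Binomial(C, 1/2)`. -/
def splitDens (θ : ℝ) (m x y : ℕ) : ℝ := binomDens θ m (x + y) * binomDens (1 / 2) (x + y) x

variable {θ ρ : ℝ} {m : ℕ}

lemma splitDens_nonneg (h0 : 0 ≤ θ) (h1 : θ ≤ 1) (x y : ℕ) : 0 ≤ splitDens θ m x y :=
  mul_nonneg (binomDens_nonneg h0 h1) (binomDens_nonneg (by norm_num) (by norm_num))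

lemma splitDens_eq_zero_of_lt {x y : ℕ} (h : m < x + y) : splitDens θ m x y = 0 := by
  rw [splitDens, binomDens_eq_zero_of_lt h, zero_mul]

lemma splitDens_eq (θ : ℝ) (m x y : ℕ) : splitDens θ m x y
    = m.choose x * (m - x).choose y * (θ / 2) ^ x * (θ / 2) ^ y * (1 - θ) ^ (m - x - y) := by
  have hchoose : (m.choose x * (m - x).choose y : ℝ) = m.choose (x + y) * (x + y).choose x := by
    exact_mod_cast Nat.choose_mul_choose_sub m x y
  rw [splitDens, binomDens, binomDens, hchoose, Nat.add_sub_cancel_left, Nat.sub_sub, div_pow,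
    div_pow, pow_add]
  ring

lemma sum_binomDens_mul_splitDens {Na Nb : ℕ} (hNa : m + 1 ≤ Na) (hNb : m + 1 ≤ Nb) (x y : ℕ) :
    ∑ a ∈ range Na, binomDens ρ a x * ∑ b ∈ range Nb, binomDens ρ b y * splitDens θ m a b
      = splitDens (ρ * θ) m x y := by
  set V := θ / 2 * (1 - ρ) + (1 - θ)
  have inner : ∀ a ∈ range Na, ∑ b ∈ range Nb, binomDens ρ b y * splitDens θ m a b
      = m.choose y * (θ / 2 * ρ) ^ y * ((m - y).choose a * (θ / 2) ^ a * V ^ (m - y - a)) := by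
    intro a _
    have hchoose : (m.choose a * (m - a).choose y : ℝ) = m.choose y * (m - y).choose a := by
      exact_mod_cast Nat.choose_mul_choose_sub_comm m a y
    calc _ = m.choose a * (θ / 2) ^ a * ∑ b ∈ range Nb,
          (m - a).choose b * (θ / 2) ^ b * (1 - θ) ^ (m - a - b) * binomDens ρ b y := by
          rw [Finset.mul_sum]
          exact Finset.sum_congr rfl fun b _ => by rw [splitDens_eq]; ring
      _ = _ := by
          rw [sum_choose_mul_binomDens _ _ _ _ _ (by omega), Nat.sub_right_comm m a y]
          linear_combination ((θ / 2) ^ a * (θ / 2 * ρ) ^ y * V ^ (m - y - a)) * hchoose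
  calc _ = m.choose y * (θ / 2 * ρ) ^ y * ∑ a ∈ range Na,
        (m - y).choose a * (θ / 2) ^ a * V ^ (m - y - a) * binomDens ρ a x := by
        rw [Finset.mul_sum]
        exact Finset.sum_congr rfl fun a ha => by rw [inner a ha]; ring
    _ = _ := by
        have hchoose : (m.choose x * (m - x).choose y : ℝ) = m.choose y * (m - y).choose x := by
          exact_mod_cast Nat.choose_mul_choose_sub_comm m x y
        rw [sum_choose_mul_binomDens _ _ _ _ _ (by omega), splitDens_eq, hchoose,
          Nat.sub_right_comm m y x]
        ring

end SplitDensity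

section LawDensity

variable {θ ρ w₁ w₂ w₃ : ℝ} {m : ℕ}

lemma sum_binomDens_mul_shift (ρ : ℝ) (g : ℕ → ℝ) (N x : ℕ) :
    ∑ a ∈ range (N + 1), binomDens ρ a x * (if 1 ≤ a then g (a - 1) else 0)
      = (if 1 ≤ x then ρ * ∑ a ∈ range N, binomDens ρ a (x - 1) * g a else 0)
        + (1 - ρ) * ∑ a ∈ range N, binomDens ρ a x * g a := by
  rw [Finset.sum_range_succ']
  simp only [le_add_iff_nonneg_left, zero_le, if_true, Nat.add_sub_cancel, Nat.one_ne_zero,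
    nonpos_iff_eq_zero, if_false, mul_zero, add_zero, binomDens_succ, add_mul,
    Finset.sum_add_distrib]
  split_ifs <;> simp [Finset.mul_sum, mul_assoc]

lemma sum_binomDens_mul_shift_fst (x y : ℕ) :
    ∑ a ∈ range (m + 2), binomDens ρ a x *
        ∑ b ∈ range (m + 2), binomDens ρ b y * (if 1 ≤ a then splitDens θ m (a - 1) b else 0)
      = (if 1 ≤ x then ρ * splitDens (ρ * θ) m (x - 1) y else 0)
        + (1 - ρ) * splitDens (ρ * θ) m x y := by
  have hite : ∀ a, ∑ b ∈ range (m + 2), binomDens ρ b y *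
        (if 1 ≤ a then splitDens θ m (a - 1) b else 0)
      = if 1 ≤ a then ∑ b ∈ range (m + 2), binomDens ρ b y * splitDens θ m (a - 1) b else 0 := by
    intro a
    split_ifs <;> simp
  simp only [hite]
  rw [sum_binomDens_mul_shift (N := m + 1) ρ (fun a => ∑ b ∈ range (m + 2),
      binomDens ρ b y * splitDens θ m a b),
    sum_binomDens_mul_splitDens le_rfl (by omega), sum_binomDens_mul_splitDens le_rfl (by omega)]

lemma sum_binomDens_mul_shift_snd (x y : ℕ) :
    ∑ a ∈ range (m + 2), binomDens ρ a x *
        ∑ b ∈ range (m + 2), binomDens ρ b y * (if 1 ≤ b then splitDens θ m a (b - 1) else 0)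
      = (if 1 ≤ y then ρ * splitDens (ρ * θ) m x (y - 1) else 0)
        + (1 - ρ) * splitDens (ρ * θ) m x y := by
  simp only [sum_binomDens_mul_shift (N := m + 1) ρ (splitDens θ m _)]
  rw [← sum_binomDens_mul_splitDens (ρ := ρ) (Na := m + 2) (by omega) le_rfl x y]
  split_ifs
  · rw [← sum_binomDens_mul_splitDens (ρ := ρ) (Na := m + 2) (by omega) le_rfl x (y - 1)]
    simp only [mul_add, Finset.sum_add_distrib, Finset.mul_sum, mul_left_comm]
  · simp only [zero_add, Finset.mul_sum, mul_left_comm]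

/-- The density of `(A + Δ₁, C - A + Δ₂)`, where `(Δ₁, Δ₂)` is `(1, 0)`, `(0, 1)`, `(0, 0)`
with weights `w₁`, `w₂`, `w₃`. -/
def lawDens (θ w₁ w₂ w₃ : ℝ) (m x y : ℕ) : ℝ :=
  (if 1 ≤ x then w₁ * splitDens θ m (x - 1) y else 0)
    + (if 1 ≤ y then w₂ * splitDens θ m x (y - 1) else 0) + w₃ * splitDens θ m x y

lemma lawDens_nonneg (h0 : 0 ≤ θ) (h1 : θ ≤ 1) (hw₁ : 0 ≤ w₁) (hw₂ : 0 ≤ w₂) (hw₃ : 0 ≤ w₃)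
    (x y : ℕ) : 0 ≤ lawDens θ w₁ w₂ w₃ m x y := by
  have hs := splitDens_nonneg (m := m) h0 h1
  refine add_nonneg (add_nonneg ?_ ?_) (mul_nonneg hw₃ (hs x y)) <;> split_ifs
  all_goals first | exact le_rfl | exact mul_nonneg (by assumption) (hs _ _)

lemma lawDens_eq_zero_of_lt {x y : ℕ} (h : m + 1 < x + y) : lawDens θ w₁ w₂ w₃ m x y = 0 := by
  simp only [lawDens, splitDens_eq_zero_of_lt (show m < x - 1 + y by omega),
    splitDens_eq_zero_of_lt (show m < x + (y - 1) by omega),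
    splitDens_eq_zero_of_lt (show m < x + y by omega), mul_zero, ite_self, add_zero]

lemma sum_binomDens_mul_lawDens (x y : ℕ) :
    ∑ a ∈ range (m + 2), binomDens ρ a x *
        ∑ b ∈ range (m + 2), binomDens ρ b y * lawDens θ w₁ w₂ w₃ m a b
      = lawDens (ρ * θ) (ρ * w₁) (ρ * w₂) (w₃ + (1 - ρ) * (w₁ + w₂)) m x y := by
  have hlin : ∀ a b, binomDens ρ a x * (binomDens ρ b y * lawDens θ w₁ w₂ w₃ m a b)
      = w₁ * (binomDens ρ a x * (binomDens ρ b y * if 1 ≤ a then splitDens θ m (a - 1) b else 0))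
        + w₂ * (binomDens ρ a x * (binomDens ρ b y * if 1 ≤ b then splitDens θ m a (b - 1) else 0))
        + w₃ * (binomDens ρ a x * (binomDens ρ b y * splitDens θ m a b)) := by
    intro a b
    unfold lawDens
    split_ifs <;> ring
  simp only [Finset.mul_sum, hlin, Finset.sum_add_distrib]
  simp only [← Finset.mul_sum]
  rw [sum_binomDens_mul_shift_fst, sum_binomDens_mul_shift_snd,
    sum_binomDens_mul_splitDens (by omega) (by omega)]
  unfold lawDens
  split_ifs <;> ring

end LawDensity

section Laws

variable {θ ρ w₁ w₂ w₃ : ℝ} {m : ℕ}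

lemma prob_eq_ofReal {x : ℝ} (h : x ≤ 1) : prob x = ENNReal.ofReal x :=
  min_eq_left (ENNReal.ofReal_le_one.2 h)

lemma binomN_apply (h0 : 0 ≤ θ) (h1 : θ ≤ 1) (m k : ℕ) :
    binomN θ m k = ENNReal.ofReal (binomDens θ m k) := by
  have hθ : ((prob θ).toNNReal : ℝ) = θ := by
    rw [ENNReal.coe_toNNReal_eq_toReal, prob_eq_ofReal h1, ENNReal.toReal_ofReal h0]
  rw [binomN, PMF.map_apply]
  rcases le_or_gt k m with hk | hk
  · have hkey : ((Fin.ofNat (m + 1) k : Fin (m + 1)) : ℕ) = k := by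
      simp [Nat.mod_eq_of_lt (Nat.lt_succ_of_le hk)]
    refine (tsum_eq_single (Fin.ofNat (m + 1) k) fun i hi => if_neg fun h => ?_).trans ?_
    · exact hi (Fin.ext (by omega))
    · rw [if_pos hkey.symm]
      calc _ = ENNReal.ofReal (m.choose k * ((prob θ).toNNReal : ℝ) ^ k
            * (1 - ((prob θ).toNNReal : ℝ)) ^ (m - k)) := (PMF.binomial_apply_of_le hk _).symm
        _ = _ := by rw [hθ, binomDens]
  · rw [binomDens_eq_zero_of_lt hk, ENNReal.ofReal_zero]
    exact ENNReal.tsum_eq_zero.2 fun i => if_neg (by omega)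

lemma triR_bind_apply {α : Type*} (hw₁ : 0 ≤ w₁) (hw₂ : 0 ≤ w₂) (hw : w₁ + w₂ ≤ 1)
    (F : Fin 3 → PMF α) (z : α) :
    ((triR w₁ w₂).bind F) z = ENNReal.ofReal w₁ * F 0 z + ENNReal.ofReal w₂ * F 1 z
      + ENNReal.ofReal (1 - w₁ - w₂) * F 2 z := by
  have hmin : min (prob w₂) (1 - ENNReal.ofReal w₁) = ENNReal.ofReal w₂ := by
    rw [prob_eq_ofReal (by linarith), ← ENNReal.ofReal_one,
      ← ENNReal.ofReal_sub _ hw₁]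
    exact min_eq_left (ENNReal.ofReal_le_ofReal (by linarith))
  have h₃ : 1 - (ENNReal.ofReal w₁ + ENNReal.ofReal w₂) = ENNReal.ofReal (1 - w₁ - w₂) := by
    rw [← ENNReal.ofReal_add hw₁ hw₂, ← ENNReal.ofReal_one,
      ← ENNReal.ofReal_sub _ (by linarith), sub_sub]
  simp [PMF.bind_apply, triR, Fin.sum_univ_three, hmin, h₃, prob_eq_ofReal (by linarith : w₁ ≤ 1)]

def splitPMF (θ : ℝ) (m : ℕ) : PMF (ℕ × ℕ) :=
  (binomN θ m).bind fun c => (binomN (1 / 2) c).map fun a => (a, c - a)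

lemma splitPMF_apply (h0 : 0 ≤ θ) (h1 : θ ≤ 1) (x y : ℕ) :
    splitPMF θ m (x, y) = ENNReal.ofReal (splitDens θ m x y) := by
  have hinner : ∀ c, ((binomN (1 / 2) c).map fun a => (a, c - a)) (x, y)
      = if c = x + y then binomN (1 / 2) c x else 0 := by
    intro c
    rw [PMF.map_apply]
    refine (tsum_eq_single x fun a ha => if_neg fun h => ha ?_).trans ?_
    · exact (congrArg Prod.fst h).symm
    simp only [Prod.mk.injEq, true_and]
    rcases le_or_gt x c with hxc | hxc
    · exact if_congr (by omega) rfl rfl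
    · rw [binomN_apply (by norm_num) (by norm_num), binomDens_eq_zero_of_lt hxc,
        ENNReal.ofReal_zero]
      simp
  simp only [splitPMF, PMF.bind_apply, hinner, mul_ite, mul_zero, tsum_ite_eq]
  rw [binomN_apply h0 h1, binomN_apply (by norm_num) (by norm_num), splitDens,
    ENNReal.ofReal_mul (binomDens_nonneg h0 h1)]

lemma lawP_eq_bind (θ w₁ w₂ : ℝ) (m : ℕ) : lawP m θ (1 / 2) w₁ w₂
    = (triR w₁ w₂).bind fun d => (splitPMF θ m).map (· + ![(1, 0), (0, 1), (0, 0)] d) := by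
  simp only [lawP, splitPMF, PMF.map_bind, PMF.map_comp]
  rw [PMF.bind_comm]
  congr 1; funext c
  simp only [← PMF.bind_pure_comp]
  rw [PMF.bind_comm]
  congr 1; funext d; congr 1; funext a
  fin_cases d <;> rfl

lemma lawQ_eq_bind (θ w₁ w₂ : ℝ) (m : ℕ) : lawQ m θ (1 / 2) w₁ w₂
    = (triR w₁ w₂).bind fun d => (splitPMF θ m).map (· + ![(0, 1), (1, 0), (0, 0)] d) := by
  simp only [lawQ, splitPMF, PMF.map_bind, PMF.map_comp]
  rw [PMF.bind_comm]
  congr 1; funext c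
  simp only [← PMF.bind_pure_comp]
  rw [PMF.bind_comm]
  congr 1; funext d; congr 1; funext a
  fin_cases d <;> rfl

lemma ofReal_lawDens (h0 : 0 ≤ θ) (h1 : θ ≤ 1) (hw₁ : 0 ≤ w₁) (hw₂ : 0 ≤ w₂) (hw₃ : 0 ≤ w₃)
    (x y : ℕ) : ENNReal.ofReal (lawDens θ w₁ w₂ w₃ m x y)
      = ENNReal.ofReal w₁ * (if 1 ≤ x then ENNReal.ofReal (splitDens θ m (x - 1) y) else 0)
        + ENNReal.ofReal w₂ * (if 1 ≤ y then ENNReal.ofReal (splitDens θ m x (y - 1)) else 0)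
        + ENNReal.ofReal w₃ * ENNReal.ofReal (splitDens θ m x y) := by
  have hs := splitDens_nonneg (m := m) h0 h1
  have hite : ∀ (c : Prop) [Decidable c] {w s : ℝ}, 0 ≤ w →
      ENNReal.ofReal w * (if c then ENNReal.ofReal s else 0)
        = ENNReal.ofReal (if c then w * s else 0) := by
    intro c _ w s hw
    split_ifs
    · exact (ENNReal.ofReal_mul hw).symm
    · simp
  have hnn : ∀ (c : Prop) [Decidable c] {w s : ℝ}, 0 ≤ w → 0 ≤ s →
      0 ≤ if c then w * s else 0 := by
    intro c _ w s hw hs'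
    split_ifs
    · exact mul_nonneg hw hs'
    · exact le_rfl
  rw [hite _ hw₁, hite _ hw₂, ← ENNReal.ofReal_mul hw₃, ← ENNReal.ofReal_add
    (hnn _ hw₁ (hs _ _)) (hnn _ hw₂ (hs _ _)), ← ENNReal.ofReal_add
    (add_nonneg (hnn _ hw₁ (hs _ _)) (hnn _ hw₂ (hs _ _))) (mul_nonneg hw₃ (hs _ _)), lawDens]

lemma lawP_apply (h0 : 0 ≤ θ) (h1 : θ ≤ 1) (hw₁ : 0 ≤ w₁) (hw₂ : 0 ≤ w₂) (hw : w₁ + w₂ ≤ 1)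
    (x y : ℕ) : lawP m θ (1 / 2) w₁ w₂ (x, y)
      = ENNReal.ofReal (lawDens θ w₁ w₂ (1 - w₁ - w₂) m x y) := by
  rw [lawP_eq_bind, triR_bind_apply hw₁ hw₂ hw, ofReal_lawDens h0 h1 hw₁ hw₂ (by linarith)]
  simp only [PMF.map_add_right_apply]
  simp [splitPMF_apply h0 h1]

lemma lawQ_apply (h0 : 0 ≤ θ) (h1 : θ ≤ 1) (hw₁ : 0 ≤ w₁) (hw₂ : 0 ≤ w₂) (hw : w₁ + w₂ ≤ 1)
    (x y : ℕ) : lawQ m θ (1 / 2) w₁ w₂ (x, y)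
      = ENNReal.ofReal (lawDens θ w₂ w₁ (1 - w₁ - w₂) m x y) := by
  rw [lawQ_eq_bind, triR_bind_apply hw₁ hw₂ hw, ofReal_lawDens h0 h1 hw₂ hw₁ (by linarith)]
  simp only [PMF.map_add_right_apply]
  simp [splitPMF_apply h0 h1]
  ring

def thinning (ρ : ℝ) (z : ℕ × ℕ) : PMF (ℕ × ℕ) :=
  (binomN ρ z.1).bind fun a => (binomN ρ z.2).map fun b => (a, b)

lemma thinning_apply (h0 : 0 ≤ ρ) (h1 : ρ ≤ 1) (z w : ℕ × ℕ) :
    thinning ρ z w = ENNReal.ofReal (binomDens ρ z.1 w.1 * binomDens ρ z.2 w.2) := by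
  have hmap : ∀ a, ((binomN ρ z.2).map fun b => (a, b)) w
      = if a = w.1 then binomN ρ z.2 w.2 else 0 := by
    intro a
    rw [PMF.map_apply]
    split_ifs with ha
    · refine (tsum_eq_single w.2 fun b hb => if_neg fun h => hb ?_).trans (if_pos ?_)
      · rw [h]
      · rw [ha]
    · exact ENNReal.tsum_eq_zero.2 fun b => if_neg fun h => ha (by rw [h])
  simp only [thinning, PMF.bind_apply, hmap, mul_ite, mul_zero, tsum_ite_eq]
  rw [binomN_apply h0 h1, binomN_apply h0 h1, ENNReal.ofReal_mul (binomDens_nonneg h0 h1)]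

lemma bind_thinning_apply {μ : PMF (ℕ × ℕ)}
    (hμ : ∀ x y, μ (x, y) = ENNReal.ofReal (lawDens θ w₁ w₂ w₃ m x y))
    (h0 : 0 ≤ θ) (h1 : θ ≤ 1) (hw₁ : 0 ≤ w₁) (hw₂ : 0 ≤ w₂) (hw₃ : 0 ≤ w₃)
    (hρ0 : 0 ≤ ρ) (hρ1 : ρ ≤ 1) (x y : ℕ) :
    (μ.bind (thinning ρ)) (x, y)
      = ENNReal.ofReal (lawDens (ρ * θ) (ρ * w₁) (ρ * w₂) (w₃ + (1 - ρ) * (w₁ + w₂)) m x y) := by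
  have hK : ∀ a b, 0 ≤ binomDens ρ a x * binomDens ρ b y := fun a b =>
    mul_nonneg (binomDens_nonneg hρ0 hρ1) (binomDens_nonneg hρ0 hρ1)
  have hterm : ∀ z : ℕ × ℕ, μ z * thinning ρ z (x, y) = ENNReal.ofReal
      (lawDens θ w₁ w₂ w₃ m z.1 z.2 * (binomDens ρ z.1 x * binomDens ρ z.2 y)) := by
    rintro ⟨a, b⟩
    rw [hμ, thinning_apply hρ0 hρ1,
      ← ENNReal.ofReal_mul (lawDens_nonneg h0 h1 hw₁ hw₂ hw₃ a b)]
  rw [PMF.bind_apply, tsum_congr hterm,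
    ENNReal.tsum_ofReal_eq_ofReal_sum (range (m + 2) ×ˢ range (m + 2))
      (fun z => mul_nonneg (lawDens_nonneg h0 h1 hw₁ hw₂ hw₃ _ _) (hK _ _)) ?_,
    Finset.sum_product, ← sum_binomDens_mul_lawDens]
  · congr 1
    refine Finset.sum_congr rfl fun a _ => ?_
    rw [Finset.mul_sum]
    exact Finset.sum_congr rfl fun b _ => by ring
  · intro z hz
    rw [lawDens_eq_zero_of_lt (by simp at hz; omega), zero_mul]

lemma lawP_bind_thinning (h0 : 0 ≤ θ) (h1 : θ ≤ 1) (hρ0 : 0 ≤ ρ) (hρ1 : ρ ≤ 1) (hw₁ : 0 ≤ w₁)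
    (hw₂ : 0 ≤ w₂) (hw : w₁ + w₂ ≤ 1) :
    (lawP m θ (1 / 2) w₁ w₂).bind (thinning ρ) = lawP m (ρ * θ) (1 / 2) (ρ * w₁) (ρ * w₂) := by
  ext ⟨x, y⟩
  rw [bind_thinning_apply (lawP_apply h0 h1 hw₁ hw₂ hw) h0 h1 hw₁ hw₂ (by linarith) hρ0 hρ1,
    lawP_apply (by positivity) (mul_le_one₀ hρ1 h0 h1) (by positivity) (by positivity)
      (by nlinarith)]
  congr 2
  ring

lemma lawQ_bind_thinning (h0 : 0 ≤ θ) (h1 : θ ≤ 1) (hρ0 : 0 ≤ ρ) (hρ1 : ρ ≤ 1) (hw₁ : 0 ≤ w₁)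
    (hw₂ : 0 ≤ w₂) (hw : w₁ + w₂ ≤ 1) :
    (lawQ m θ (1 / 2) w₁ w₂).bind (thinning ρ) = lawQ m (ρ * θ) (1 / 2) (ρ * w₁) (ρ * w₂) := by
  ext ⟨x, y⟩
  rw [bind_thinning_apply (lawQ_apply h0 h1 hw₁ hw₂ hw) h0 h1 hw₂ hw₁ (by linarith) hρ0 hρ1,
    lawQ_apply (by positivity) (mul_le_one₀ hρ1 h0 h1) (by positivity) (by positivity)
      (by nlinarith)]
  congr 2
  ring

end Laws

lemma Pq_Qq_bind_thinning (n : ℕ) {p q β β' : ℝ} (hp : 1 < p) (hq : 1 ≤ q) (hβ'0 : 0 ≤ β')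
    (hβ'β : β' ≤ β) (hβ : β ≤ (p - 1) / (p + 1)) (hr : 2 * p * β / ((p - 1) * q) ≤ 1)
    (hβ0 : 0 < β) :
    (Pq n p β q).bind (thinning (β' / β)) = Pq n p β' q ∧
      (Qq n p β q).bind (thinning (β' / β)) = Qq n p β' q := by
  set α := β / (p - 1)
  set ρ := β' / β
  have hp1 : 0 < p - 1 := by linarith
  have hα : 0 ≤ α := div_nonneg hβ0.le hp1.le
  have hθ : 2 * (p * α / q) ≤ 1 := by
    convert hr using 1
    simp only [α]
    field_simp
  have hw : p * α + α ≤ 1 := by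
    rw [le_div_iff₀ (by linarith)] at hβ
    rw [← add_one_mul, mul_div_assoc', div_le_one hp1]
    linarith
  have hρ0 : 0 ≤ ρ := div_nonneg hβ'0 hβ0.le
  have hρ1 : ρ ≤ 1 := (div_le_one hβ0).2 hβ'β
  have hα' : β' / (p - 1) = ρ * α := by
    simp only [ρ, α]
    field_simp
  constructor
  · rw [Pq, lawP_bind_thinning (by positivity) hθ hρ0 hρ1 (by positivity) hα hw, Pq, hα']
    ring_nf
  · rw [Qq, lawQ_bind_thinning (by positivity) hθ hρ0 hρ1 (by positivity) hα hw, Qq, hα']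
    ring_nf

theorem stmt5_general (n : ℕ) (p q β β' : ℝ) (hp : 1 < p) (hq : 1 ≤ q)
    (hβ'0 : 0 ≤ β') (hβ'β : β' ≤ β) (hβ : β ≤ (p - 1) / (p + 1))
    (hr : 2 * p * β / ((p - 1) * q) ≤ 1) (γ : ℝ) (hγ : 0 ≤ γ) :
    hsDiv (Pq n p β' q) (Qq n p β' q) γ ≤ hsDiv (Pq n p β q) (Qq n p β q) γ := by
  rcases (hβ'0.trans hβ'β).eq_or_lt with hβ0 | hβ0
  · obtain rfl : β' = β := by linarith
    exact le_rfl
  obtain ⟨hP, hQ⟩ := Pq_Qq_bind_thinning n hp hq hβ'0 hβ'β hβ hr hβ0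
  rw [← hP, ← hQ]
  exact hsDiv_bind_le _ _ _ hγ

theorem stmt5 (n : ℕ) (hn : 1 ≤ n) (p q β β' : ℝ) (hp : 1 < p) (hq : 1 ≤ q)
    (hβ'0 : 0 ≤ β') (hβ'β : β' ≤ β) (hβ : β ≤ (p - 1) / (p + 1))
    (hr : 2 * p * β / ((p - 1) * q) ≤ 1) (γ : ℝ) (hγ : 0 ≤ γ) :
    hsDiv (Pq n p β' q) (Qq n p β' q) γ ≤ hsDiv (Pq n p β q) (Qq n p β q) γ :=
  stmt5_general n p q β β' hp hq hβ'0 hβ'β hβ hr γ hγ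
end
end

section
/- Let P and Q be probability mass functions on a countable type and ε ≥ 0 be such that P(y) ≤ e^ε·Q(y) and Q(y) ≤ e^ε·P(y) for every y. Then D₁(P‖Q) ≤ (e^ε − 1)/(e^ε + 1); that is, any ε-LDP pair of output distributions has total variation distance at most (e^ε − 1)/(e^ε + 1). -/
open scoped ENNReal
open Finset

noncomputable section

/-!
Write `p = P y`, `q = Q y`, `E = e^ε` and `c = (E - 1)/(E + 1)`. The two ratio bounds give
`|p - q| ≤ c (p + q)` pointwise, hence `(p - q)⁺ = (|p - q| + (p - q))/2 ≤ (c (p + q) + (p - q))/2`.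
Summing over `y`, the right-hand side adds up to `(2c + 0)/2 = c`.
-/

theorem PMF.hasSum_toReal {α : Type*} (p : PMF α) : HasSum (fun a => (p a).toReal) 1 := by
  have h := ENNReal.hasSum_toReal p.tsum_coe_ne_top
  rwa [← ENNReal.tsum_toReal_eq p.apply_ne_top, p.tsum_coe, ENNReal.toReal_one] at h

theorem max_zero_sub_le_of_le_mul {p q E : ℝ} (hE : 0 < E)
    (hpq : p ≤ E * q) (hqp : q ≤ E * p) :
    max 0 (p - q) ≤ ((E - 1) / (E + 1) * (p + q) + (p - q)) / 2 := by
  have hE1 : 0 < E + 1 := by linarith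
  refine max_le ?_ ?_ <;>
    rw [div_mul_eq_mul_div, div_add' _ _ _ hE1.ne', div_div, le_div_iff₀ (by positivity)] <;>
    linarith

theorem hsDiv_one_le_of_le_mul {Y : Type*} (P Q : PMF Y) {E : ℝ} (hE : 0 < E)
    (hPQ : ∀ y, (P y).toReal ≤ E * (Q y).toReal)
    (hQP : ∀ y, (Q y).toReal ≤ E * (P y).toReal) :
    hsDiv P Q 1 ≤ (E - 1) / (E + 1) := by
  set c := (E - 1) / (E + 1)
  have hbound : HasSum
      (fun y => (c * ((P y).toReal + (Q y).toReal) + ((P y).toReal - (Q y).toReal)) / 2)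
      ((c * (1 + 1) + (1 - 1)) / 2) :=
    (((P.hasSum_toReal.add Q.hasSum_toReal).mul_left c).add
      (P.hasSum_toReal.sub Q.hasSum_toReal)).div_const 2
  have hle : ∀ y, max 0 ((P y).toReal - 1 * (Q y).toReal)
      ≤ (c * ((P y).toReal + (Q y).toReal) + ((P y).toReal - (Q y).toReal)) / 2 := fun y => by
    rw [one_mul]; exact max_zero_sub_le_of_le_mul hE (hPQ y) (hQP y)
  calc hsDiv P Q 1
      ≤ (c * (1 + 1) + (1 - 1)) / 2 :=
        hasSum_le hle
          (Summable.of_nonneg_of_le (fun _ => le_max_left _ _) hle hbound.summable).hasSum hbound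
    _ = c := by ring

theorem stmt17_general {Y : Type*} (P Q : PMF Y) (ε : ℝ)
    (h1 : ∀ y, (P y).toReal ≤ Real.exp ε * (Q y).toReal)
    (h2 : ∀ y, (Q y).toReal ≤ Real.exp ε * (P y).toReal) :
    hsDiv P Q 1 ≤ (Real.exp ε - 1) / (Real.exp ε + 1) :=
  hsDiv_one_le_of_le_mul P Q (Real.exp_pos ε) h1 h2

theorem stmt17 {Y : Type*} [Countable Y] (P Q : PMF Y) (ε : ℝ) (hε : 0 ≤ ε)
    (h1 : ∀ y, (P y).toReal ≤ Real.exp ε * (Q y).toReal)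
    (h2 : ∀ y, (Q y).toReal ≤ Real.exp ε * (P y).toReal) :
    hsDiv P Q 1 ≤ (Real.exp ε - 1) / (Real.exp ε + 1) :=
  stmt17_general P Q ε h1 h2

end
end

section
/- For any real ε > 0, let f₀, f₁ : ℝ → ℝ be the Laplace densities f₀(x) = (ε/2)·exp(−ε·|x|) and f₁(x) = (ε/2)·exp(−ε·|x−1|). Then the total variation distance between the two Laplace distributions, ∫_ℝ max(0, f₀(x) − f₁(x)) dx (Lebesgue integral), equals 1 − exp(−ε/2). This is the pairwise total variation bound β = 1 − e^{−ε/2} of the ε-LDP Laplace mechanism on inputs in [0,1]. -/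
open scoped ENNReal
open Finset

noncomputable section

/-
The two densities are mirror images about `1/2`, and `f₀ ≥ f₁` exactly on `(-∞, 1/2]`. Hence the
distance is `F₀(1/2) - F₁(1/2)` for the Laplace distribution functions
`F_μ(c) = ∫_{-∞}^c (ε/2) e^{-ε|x-μ|} dx`, which are `e^{-ε(μ-c)}/2` for `c ≤ μ` and
`1 - e^{-ε(c-μ)}/2` for `c ≥ μ`; this gives `(1 - e^{-ε/2}/2) - e^{-ε/2}/2`.
-/

open MeasureTheory Set Real

lemma max_zero_eq_indicator {α : Type*} {g : α → ℝ} {s : Set α} (hs : ∀ x, 0 ≤ g x ↔ x ∈ s) :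
    (fun x => max 0 (g x)) = s.indicator g := by
  funext x
  by_cases hx : x ∈ s
  · rw [indicator_of_mem hx, max_eq_right ((hs x).2 hx)]
  · rw [indicator_of_notMem hx, max_eq_left (not_le.1 (mt (hs x).1 hx)).le]

section Laplace

variable {ε μ c : ℝ}

lemma integrable_exp_neg_mul_abs_sub (hε : 0 < ε) (μ : ℝ) :
    Integrable fun x => exp (-(ε * |x - μ|)) := by
  suffices Integrable fun x => exp (-(ε * |x|)) from this.comp_sub_right μ
  rw [← integrableOn_univ, ← Iic_union_Ioi (a := 0), integrableOn_union]
  constructor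
  · refine (integrableOn_exp_mul_Iic hε 0).congr_fun (fun x hx => ?_) measurableSet_Iic
    rw [abs_of_nonpos hx, mul_neg, neg_neg]
  · refine (integrableOn_exp_mul_Ioi (neg_lt_zero.2 hε) 0).congr_fun (fun x hx => ?_)
      measurableSet_Ioi
    simp only [abs_of_pos (mem_Ioi.1 hx), neg_mul]

lemma setIntegral_Iic_laplace_of_le (hε : 0 < ε) (hc : c ≤ μ) :
    ∫ x in Iic c, ε / 2 * exp (-(ε * |x - μ|)) = exp (-(ε * (μ - c))) / 2 := by
  have hexp : EqOn (fun x => ε / 2 * exp (-(ε * |x - μ|)))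
      (fun x => ε / 2 * exp (-(ε * μ)) * exp (ε * x)) (Iic c) := fun x hx => by
    dsimp only
    rw [abs_of_nonpos (by linarith [mem_Iic.1 hx]), mul_assoc, ← exp_add]
    ring_nf
  rw [setIntegral_congr_fun measurableSet_Iic hexp, integral_const_mul,
    integral_exp_mul_Iic hε, mul_div_assoc', mul_assoc, ← exp_add]
  field_simp
  ring_nf

lemma intervalIntegral_laplace_of_le (hc : μ ≤ c) :
    ∫ x in μ..c, ε / 2 * exp (-(ε * |x - μ|)) = (1 - exp (-(ε * (c - μ)))) / 2 := by
  have hderiv (x : ℝ) : HasDerivAt (fun y => -(1 / 2) * exp (-ε * (y - μ)))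
      (ε / 2 * exp (-ε * (x - μ))) x :=
    ((((hasDerivAt_id' x).sub_const μ).const_mul (-ε)).exp.const_mul (-(1 / 2))).congr_deriv
      (by ring)
  rw [intervalIntegral.integral_congr (g := fun x => ε / 2 * exp (-ε * (x - μ))) fun x hx => by
      rw [uIcc_of_le hc] at hx
      simp only [abs_of_nonneg (sub_nonneg.2 hx.1), neg_mul],
    intervalIntegral.integral_eq_sub_of_hasDerivAt (fun x _ => hderiv x)
      ((by fun_prop : Continuous _).intervalIntegrable _ _)]
  simp only [sub_self, mul_zero, exp_zero, neg_mul]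
  ring

lemma setIntegral_Iic_laplace_of_ge (hε : 0 < ε) (hc : μ ≤ c) :
    ∫ x in Iic c, ε / 2 * exp (-(ε * |x - μ|)) = 1 - exp (-(ε * (c - μ))) / 2 := by
  have hint {s : Set ℝ} : IntegrableOn (fun x => ε / 2 * exp (-(ε * |x - μ|))) s :=
    ((integrable_exp_neg_mul_abs_sub hε μ).const_mul (ε / 2)).integrableOn
  rw [← sub_add_cancel (∫ x in Iic c, _) (∫ x in Iic μ, ε / 2 * exp (-(ε * |x - μ|))),
    intervalIntegral.integral_Iic_sub_Iic hint hint, intervalIntegral_laplace_of_le hc,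
    setIntegral_Iic_laplace_of_le hε le_rfl, sub_self, mul_zero, neg_zero, exp_zero]
  ring

lemma laplace_sub_laplace_shift_nonneg_iff (hε : 0 < ε) (x : ℝ) :
    0 ≤ ε / 2 * exp (-(ε * |x|)) - ε / 2 * exp (-(ε * |x - 1|)) ↔ x ∈ Set.Iic (1 / 2) := by
  rw [Set.mem_Iic, sub_nonneg, mul_le_mul_iff_right₀ (half_pos hε), exp_le_exp, neg_le_neg_iff,
    mul_le_mul_iff_right₀ hε, ← sq_le_sq]
  constructor <;> intro h <;> nlinarith

end Laplace

open MeasureTheory in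
theorem stmt18 (ε : ℝ) (hε : 0 < ε) :
    ∫ x : ℝ, max 0 (ε / 2 * Real.exp (-(ε * |x|)) - ε / 2 * Real.exp (-(ε * |x - 1|))) =
      1 - Real.exp (-(ε / 2)) := by
  have hint (μ : ℝ) : IntegrableOn (fun x => ε / 2 * exp (-(ε * |x - μ|))) (Set.Iic (1 / 2)) :=
    ((integrable_exp_neg_mul_abs_sub hε μ).const_mul (ε / 2)).integrableOn
  have hint₀ := hint 0
  have hf₀ := setIntegral_Iic_laplace_of_ge hε (μ := 0) (c := 1 / 2) (by norm_num)
  have hf₁ := setIntegral_Iic_laplace_of_le hε (μ := 1) (c := 1 / 2) (by norm_num)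
  simp only [sub_zero] at hint₀ hf₀
  rw [max_zero_eq_indicator (laplace_sub_laplace_shift_nonneg_iff hε),
    integral_indicator measurableSet_Iic, integral_sub hint₀ (hint 1), hf₀, hf₁]
  ring_nf

end
end
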